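/- arXiv:1306.0771 — 2 statements merged into one kernel-verified Lean document; each statement's English description precedes it below -/
import Mathlib

section
/- For every input sequence I of length n, Opt(I) ≤ (n/2)·Eag(I). Moreover on E_n, Opt(E_n) = (n/2)·Eag(E_n) − 4 + 8/n, so Eag has competitive function exactly n/2. -/
open scoped BigOperators

noncomputable section

/-- frequency of item `a` in sequence `I` -/
def freq (I : List ℕ) (a : ℕ) : ℝ := (I.count a : ℝ) / (I.length : ℝ)

/-- profit (aggregate frequency) of buffer sequence `S` against input `I` -/
def profit (I S : List ℕ) : ℝ := (S.map (freq I)).sum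

/-- Naive algorithm: buffers every arriving item. -/
def naiP (I : List ℕ) : ℝ := profit I I

/-- Buffers of the eager algorithm: buffer each arriving item until the first
repeated item (two equal consecutive items), then keep it forever. -/
def eagRun : List ℕ → List ℕ
  | [] => []
  | [x] => [x]
  | x :: y :: rest =>
      if x = y then x :: List.replicate (rest.length + 1) x
      else x :: eagRun (y :: rest)

def eagP (I : List ℕ) : ℝ := profit I (eagRun I)

/-- One step of the Majority algorithm on state (buffer, counter). -/
def majStep (s : ℕ × ℕ) (a : ℕ) : ℕ × ℕ :=
  if s.2 = 0 then (a, 1)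
  else if a = s.1 then (s.1, s.2 + 1)
  else (s.1, s.2 - 1)

def majBuffers (I : List ℕ) : List ℕ :=
  ((List.scanl majStep ((0 : ℕ), (0 : ℕ)) I).tail).map Prod.fst

def majP (I : List ℕ) : ℝ := profit I (majBuffers I)

/-- A valid offline buffer schedule: at each step the buffer holds either the
currently arriving item or the previously buffered item (the first buffered
item must be the first arriving item). -/
def ValidSched (I S : List ℕ) : Prop :=
  S.length = I.length ∧
    ∀ i, i < S.length →
      S.getD i 0 = I.getD i 0 ∨ (0 < i ∧ S.getD i 0 = S.getD (i - 1) 0)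

/-- Optimal offline profit. -/
def optP (I : List ℕ) : ℝ := sSup {x | ∃ S, ValidSched I S ∧ x = profit I S}

/-- Worst-permutation value of an algorithm's profit. -/
def worstP (f : List ℕ → ℝ) (I : List ℕ) : ℝ := sInf {x | ∃ J, J.Perm I ∧ x = f J}

/-- E_n = a,a,b,b,...,b with n-2 copies of b. -/
def Eseq (n a b : ℕ) : List ℕ := a :: a :: List.replicate (n - 2) b

/-- W_n = a_1,a_0,a_2,a_0,... with item 0 playing the role of a_0. -/
def Wseq (n : ℕ) : List ℕ :=
  ((List.range (n / 2)).flatMap fun i => [i + 1, 0]) ++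
    (if n % 2 = 1 then [n / 2 + 1] else [])

/-- W'_n = a_1,...,a_⌈n/2⌉,a_0,...,a_0 with ⌊n/2⌋ copies of a_0 = 0. -/
def Wseq' (n : ℕ) : List ℕ :=
  ((List.range ((n + 1) / 2)).map (· + 1)) ++ List.replicate (n / 2) 0

/-- I_n = ⌈n/2⌉ copies of a_0 = 0 followed by ⌊n/2⌋ distinct items. -/
def Iseq (n : ℕ) : List ℕ :=
  List.replicate ((n + 1) / 2) 0 ++ (List.range (n / 2)).map (· + 1)

/-- D(I): the items of `I` listed in nondecreasing order of frequency. -/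
def Dsort (I : List ℕ) : List ℕ :=
  List.insertionSort (fun x y => I.count x ≤ I.count y) I

/-- The interleaving permutation a'_1, a'_n, a'_2, a'_{n-1}, ... of a list. -/
def interleave : List ℕ → List ℕ
  | [] => []
  | x :: xs => x :: interleave xs.reverse
termination_by l => l.length
decreasing_by set_option linter.unnecessarySimpa false in simpa using Nat.lt_succ_self xs.length

/-- max over sequences of length n of f(I) - g(I). -/
def maxDiff (f g : List ℕ → ℝ) (n : ℕ) : ℝ :=
  sSup {d | ∃ I : List ℕ, I.length = n ∧ d = f I - g I}

/-- min over sequences of length n of f(I) - g(I). -/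
def minDiff (f g : List ℕ → ℝ) (n : ℕ) : ℝ :=
  sInf {d | ∃ I : List ℕ, I.length = n ∧ d = f I - g I}

/-- A deterministic online algorithm for the single-buffer frequent items
problem: the buffer after each nonempty prefix is either the arriving item or
the previous buffer content. -/
structure OnlineAlg where
  buf : List ℕ → ℕ
  first : ∀ x, buf [x] = x
  step : ∀ l x, l ≠ [] → buf (l ++ [x]) = x ∨ buf (l ++ [x]) = buf l

/-- Profit of an online algorithm on input `I`. -/
def oprofit (A : OnlineAlg) (I : List ℕ) : ℝ :=
  ∑ t ∈ Finset.range I.length, freq I (A.buf (I.take (t + 1)))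

end

/-!
Both halves of the first claim reduce to one inequality on occurrence counts: for every item `c`,
`2 · count c ≤ Σ_{s ∈ eagRun I} count s = n · Eag(I)`, while `Opt(I) ≤ max_c count c`.
If `I` has no two equal consecutive items, `Eag` buffers `I` itself and the sum is
`Σ_{y ∈ I} count y ≥ max(n, (count c)²)`. Otherwise let the first repeat sit at positions
`p + 1, p + 2`: the first `p + 1` items alternate, so `c` occurs at most `(p + 2) / 2` times among
them and at most `n - p - 1` times after them, while `Eag` earns at least `1/n` on each of its
first `p` steps and at least `2/n` on each of the remaining `n - p`.

On `E_n` every schedule is forced to buffer `a` twice and can do no better than `b` afterwards, so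
`Opt(E_n)` is the profit `n - 4 + 8/n` of buffering every item, while `Eag` keeps `a` and earns `2`.
-/

namespace List

variable {α : Type*} [DecidableEq α]

theorem two_mul_count_le_length_add_one_of_isChain_ne (a : α) :
    ∀ {l : List α}, l.IsChain (· ≠ ·) → 2 * l.count a ≤ l.length + 1
  | [], _ => by simp
  | [x], _ => by by_cases h : x = a <;> simp [h]
  | x :: y :: l, h => by
    obtain ⟨hxy, hyl⟩ := isChain_cons_cons.mp h
    have ih : 2 * l.count a ≤ l.length + 1 :=
      two_mul_count_le_length_add_one_of_isChain_ne a hyl.tail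
    have : (x :: y :: l).count a ≤ l.count a + 1 := by
      simp only [count_cons, beq_iff_eq]
      split_ifs <;> simp_all
    simp only [length_cons]
    omega

theorem length_le_sum_map_count {l s : List α} (h : ∀ x ∈ s, x ∈ l) :
    s.length ≤ (s.map l.count).sum := by
  simpa using card_nsmul_le_sum (s.map l.count) 1 (by simpa [count_pos_iff])

theorem count_mul_count_le_sum_map_count (l : List α) (a : α) :
    l.count a * l.count a ≤ (l.map l.count).sum := by
  have hsub : replicate (l.count a) a <+ l := replicate_sublist_iff.mpr le_rfl
  simpa using (hsub.map l.count).sum_le_sum (fun _ _ => Nat.zero_le _)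

theorem two_mul_count_le_sum_map_count {l : List α} (hl : 2 ≤ l.length) (a : α) :
    2 * l.count a ≤ (l.map l.count).sum := by
  rcases le_or_gt (l.count a) 1 with h | h
  · have := length_le_sum_map_count (fun x (hx : x ∈ l) => hx)
    omega
  · exact (Nat.mul_le_mul_right _ h).trans (count_mul_count_le_sum_map_count l a)

end List

theorem profit_eq_sum_count (I S : List ℕ) :
    profit I S = ((S.map I.count).sum : ℝ) / I.length := by
  have hfreq : freq I = fun a => (I.count a : ℝ) * (I.length : ℝ)⁻¹ :=
    funext fun _ => div_eq_mul_inv _ _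
  rw [profit, hfreq, List.sum_map_mul_right, Nat.cast_list_sum, List.map_map, div_eq_mul_inv]
  rfl

theorem validSched_self (I : List ℕ) : ValidSched I I :=
  ⟨rfl, fun _ _ => Or.inl rfl⟩

theorem optP_le_of_count_le {I : List ℕ} {M : ℝ} (hM : 0 ≤ M) (h : ∀ a, (I.count a : ℝ) ≤ M) :
    optP I ≤ M := by
  refine Real.sSup_le ?_ hM
  rintro _ ⟨S, ⟨hlen, -⟩, rfl⟩
  rw [profit_eq_sum_count]
  refine div_le_of_le_mul₀ (Nat.cast_nonneg _) hM ?_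
  have := List.sum_le_card_nsmul ((S.map I.count).map ((↑) : ℕ → ℝ)) M
    (by simpa using fun s _ => h s)
  simpa [Nat.cast_list_sum, hlen, mul_comm] using this

theorem eagRun_eq_self_or_eq_append_replicate : ∀ I : List ℕ,
    eagRun I = I ∨ ∃ l₁ x l₂, I = l₁ ++ x :: x :: l₂ ∧ (l₁ ++ [x]).IsChain (· ≠ ·) ∧
      eagRun I = l₁ ++ List.replicate (l₂.length + 2) x
  | [] => .inl rfl
  | [_] => .inl rfl
  | x :: y :: rest => by
    by_cases hxy : x = y
    · subst hxy
      refine .inr ⟨[], x, rest, rfl, .singleton x, ?_⟩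
      simp [eagRun, List.replicate_succ]
    · have hrun : eagRun (x :: y :: rest) = x :: eagRun (y :: rest) := by simp [eagRun, hxy]
      rcases eagRun_eq_self_or_eq_append_replicate (y :: rest) with h | ⟨l₁, z, l₂, hI, hchain, h⟩
      · exact .inl (by rw [hrun, h])
      · refine .inr ⟨x :: l₁, z, l₂, by rw [hI, List.cons_append], ?_,
          by rw [hrun, h, List.cons_append]⟩
        refine List.isChain_cons.mpr ⟨fun w hw => ?_, hchain⟩
        cases l₁ <;> simp_all

theorem two_mul_count_le_sum_count_eagRun {I : List ℕ} (hI : 2 ≤ I.length) (c : ℕ) :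
    2 * I.count c ≤ ((eagRun I).map I.count).sum := by
  rcases eagRun_eq_self_or_eq_append_replicate I with h | ⟨l₁, x, l₂, rfl, hchain, h⟩
  · rw [h]
    exact List.two_mul_count_le_sum_map_count hI c
  · set I := l₁ ++ x :: x :: l₂
    have hcount : I.count c = (l₁ ++ [x]).count c + (x :: l₂).count c := by
      rw [← List.count_append]
      simp [I]
    have hprefix := List.two_mul_count_le_length_add_one_of_isChain_ne c hchain
    have hsuffix := (x :: l₂).count_le_length (a := c)
    have hl₁ := List.length_le_sum_map_count (l := I) (s := l₁) (fun y hy => by simp [I, hy])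
    have hx : 2 ≤ I.count x := by
      simp only [I, List.count_append, List.count_cons_self]
      omega
    have hrep := Nat.mul_le_mul_left (l₂.length + 2) hx
    rw [h, List.map_append, List.sum_append, List.map_replicate, List.sum_replicate, smul_eq_mul]
    simp only [List.length_append, List.length_cons, List.length_nil] at hprefix hsuffix
    omega

theorem optP_le_half_length_mul_eagP {I : List ℕ} (hI : 2 ≤ I.length) :
    optP I ≤ I.length / 2 * eagP I := by
  have hn : (I.length : ℝ) ≠ 0 := by positivity
  have heq : (I.length : ℝ) / 2 * eagP I = ((eagRun I).map I.count).sum / 2 := by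
    rw [eagP, profit_eq_sum_count]
    field_simp
  rw [heq]
  refine optP_le_of_count_le (by positivity) fun c => ?_
  rw [le_div_iff₀ two_pos, mul_comm]
  exact_mod_cast two_mul_count_le_sum_count_eagRun hI c

theorem ValidSched.exists_eq_cons_cons {a : ℕ} {J S : List ℕ} (h : ValidSched (a :: a :: J) S) :
    ∃ S', S = a :: a :: S' ∧ S'.length = J.length := by
  obtain ⟨hlen, hstep⟩ := h
  match S, hlen, hstep with
  | s₀ :: s₁ :: S', hlen, hstep =>
    have h₀ : s₀ = a := by simpa using hstep 0 (by simp)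
    have h₁ : s₁ = a := by simpa [h₀] using hstep 1 (by simp)
    exact ⟨S', by rw [h₀, h₁], by simpa using hlen⟩

section Eseq

variable {n a b : ℕ}

theorem length_Eseq (hn : 2 ≤ n) : (Eseq n a b).length = n := by
  simp [Eseq]
  omega

theorem count_Eseq_left (hab : a ≠ b) : (Eseq n a b).count a = 2 := by
  simp [Eseq, List.count_replicate, hab.symm]

theorem count_Eseq_right (hab : a ≠ b) : (Eseq n a b).count b = n - 2 := by
  simp [Eseq, hab]

theorem count_Eseq_le (hab : a ≠ b) (hn : 4 ≤ n) (c : ℕ) : (Eseq n a b).count c ≤ n - 2 := by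
  simp only [Eseq, List.count_cons, List.count_replicate, beq_iff_eq]
  split_ifs <;> omega

theorem eagP_Eseq (hab : a ≠ b) (hn : 2 ≤ n) : eagP (Eseq n a b) = 2 := by
  have hrun : eagRun (Eseq n a b) = List.replicate n a := by
    obtain ⟨m, rfl⟩ := Nat.exists_eq_add_of_le' hn
    simp [Eseq, eagRun, List.replicate_succ]
  have hn' : (n : ℝ) ≠ 0 := by positivity
  rw [eagP, profit_eq_sum_count, hrun, List.map_replicate, List.sum_replicate, smul_eq_mul,
    count_Eseq_left hab, length_Eseq hn]
  field_simp
  norm_num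

theorem profit_le_naiP_Eseq (hab : a ≠ b) (hn : 4 ≤ n) {S : List ℕ}
    (hS : ValidSched (Eseq n a b) S) : profit (Eseq n a b) S ≤ naiP (Eseq n a b) := by
  obtain ⟨S', rfl, hlen⟩ := hS.exists_eq_cons_cons
  rw [naiP, profit_eq_sum_count, profit_eq_sum_count]
  gcongr
  have hS' := List.sum_le_card_nsmul (S'.map (Eseq n a b).count) (n - 2)
    (by simpa using fun c _ => count_Eseq_le hab hn c)
  simp only [List.length_map, hlen, List.length_replicate, smul_eq_mul] at hS'
  simp only [Eseq, List.map_cons, List.sum_cons, List.map_replicate, List.sum_replicate,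
    smul_eq_mul]
  rw [← Eseq, count_Eseq_right hab]
  omega

theorem optP_Eseq (hab : a ≠ b) (hn : 4 ≤ n) : optP (Eseq n a b) = n - 4 + 8 / n := by
  have hopt : optP (Eseq n a b) = naiP (Eseq n a b) :=
    IsGreatest.csSup_eq ⟨⟨_, validSched_self _, rfl⟩,
      by rintro _ ⟨S, hS, rfl⟩; exact profit_le_naiP_Eseq hab hn hS⟩
  have hn' : (n : ℝ) ≠ 0 := by positivity
  rw [hopt, naiP, profit_eq_sum_count, length_Eseq (by omega)]
  simp only [Eseq, List.map_cons, List.sum_cons, List.map_replicate, List.sum_replicate,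
    smul_eq_mul]
  rw [← Eseq, count_Eseq_left hab, count_Eseq_right hab]
  push_cast [Nat.cast_sub (by omega : 2 ≤ n)]
  field_simp
  ring

end Eseq

/-- Opt(I) ≤ (n/2)·Eag(I) for every I, and on E_n,
Opt(E_n) = (n/2)·Eag(E_n) − 4 + 8/n; hence Eag has competitive function n/2. -/
theorem stmt11 :
    (∀ I : List ℕ, 2 ≤ I.length → optP I ≤ (I.length : ℝ) / 2 * eagP I) ∧
    (∀ n a b : ℕ, a ≠ b → 4 ≤ n →
      optP (Eseq n a b) = (n : ℝ) / 2 * eagP (Eseq n a b) - 4 + 8 / n) := by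
  refine ⟨fun _ => optP_le_half_length_mul_eagP, fun n a b hab hn => ?_⟩
  rw [optP_Eseq hab hn, eagP_Eseq hab (by omega)]
  ring
end

section
/- For every sequence I of length n, Nai(I) − Maj_W(I) ≤ p − p²/n ≤ n/4, where p is the number of occurrences of the most frequent item and Maj_W is Maj's profit on its worst permutation of I; equality n/4 − O(1) is achieved on W_n. Hence Max(Nai, Maj) = 1/4 in relative interval analysis. -/
open scoped BigOperators

/-!
Let `c a` be the number of occurrences of `a` in `I`, `p = max c`, `n = |I|`, and let `b a` be the
number of steps at which `Maj`, run on a permutation of `I`, buffers `a`. Then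
`n · (Nai − Maj) = Σ (c a − b a) · c a` with `Σ b = Σ c = n`, and `b ≤ 2c` by a potential argument
on the counter of `Maj`. Since `Σ (c − b) = 0`, the sum equals `Σ (b − c)(p − c) ≤ Σ c (p − c)
≤ p (n − p)`, and `p − p²/n ≤ n/4` is AM–GM. On `W_{2k}` the permutation-independent lower bound
`Maj ≥ 1` is attained, since `Maj` only ever buffers the singletons, while `Nai = (k + 1)/2`;
this also gives the lower bound on the limsup.
-/

open Finset Filter

def majBuffersFrom (s : ℕ × ℕ) (J : List ℕ) : List ℕ :=
  (List.scanl majStep s J).tail.map Prod.fst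

@[simp]
lemma majBuffersFrom_nil (s : ℕ × ℕ) : majBuffersFrom s [] = [] := rfl

@[simp]
lemma majBuffersFrom_cons (s : ℕ × ℕ) (x : ℕ) (J : List ℕ) :
    majBuffersFrom s (x :: J) = (majStep s x).1 :: majBuffersFrom (majStep s x) J := by
  cases J <;> simp [majBuffersFrom, List.scanl]

@[simp]
lemma length_majBuffers (J : List ℕ) : (majBuffers J).length = J.length := by
  simp [majBuffers, List.length_scanl]

/-- Every step at which `Maj` holds `a` is paid for by an arrival of `a` or by one unit of this
credit, and each arrival of `a` adds at most one unit: hence `a` is held at most twice per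
occurrence. -/
def majCredit (a : ℕ) (s : ℕ × ℕ) : ℕ := if s.1 = a then s.2 else 0

lemma majStep_credit (a x : ℕ) (s : ℕ × ℕ) :
    (if (majStep s x).1 = a then 1 else 0) + majCredit a (majStep s x) ≤
      2 * (if x = a then 1 else 0) + majCredit a s := by
  obtain ⟨b, c⟩ := s
  unfold majStep majCredit
  split_ifs <;> simp_all <;> omega

lemma count_majBuffersFrom_le (a : ℕ) (J : List ℕ) (s : ℕ × ℕ) :
    (majBuffersFrom s J).count a ≤ 2 * J.count a + majCredit a s := by
  induction J generalizing s with
  | nil => simp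
  | cons x J ih =>
    have := majStep_credit a x s
    have := ih (majStep s x)
    simp only [majBuffersFrom_cons, List.count_cons, beq_iff_eq]
    omega

lemma count_majBuffers_le (J : List ℕ) (a : ℕ) : (majBuffers J).count a ≤ 2 * J.count a := by
  show (majBuffersFrom (0, 0) J).count a ≤ _
  simpa [majCredit] using count_majBuffersFrom_le a J (0, 0)

lemma mem_of_mem_majBuffers {J : List ℕ} {a : ℕ} (ha : a ∈ majBuffers J) : a ∈ J := by
  have := count_majBuffers_le J a
  rw [← List.count_pos_iff] at ha ⊢
  omega

lemma sum_count_eq_length_of_subset {S : List ℕ} {u : Finset ℕ} (hS : S.toFinset ⊆ u) :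
    ∑ a ∈ u, S.count a = S.length := by
  rw [← List.sum_toFinset_count_eq_length]
  exact (sum_subset hS fun a _ ha => List.count_eq_zero.mpr (mt List.mem_toFinset.mpr ha)).symm

lemma profit_eq_sum_count_s14 {I S : List ℕ} {u : Finset ℕ} (hS : S.toFinset ⊆ u) :
    profit I S = (∑ a ∈ u, (S.count a : ℝ) * I.count a) / I.length := by
  rw [profit, sum_list_map_count, sum_div]
  refine sum_subset hS (fun a _ ha => ?_) |>.trans (sum_congr rfl fun a _ => ?_)
  · simp [List.count_eq_zero.mpr (mt List.mem_toFinset.mpr ha)]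
  · rw [nsmul_eq_mul, freq, mul_div_assoc]

lemma profit_perm {I J : List ℕ} (h : J.Perm I) (S : List ℕ) : profit J S = profit I S := by
  have : freq J = freq I := funext fun a => by rw [freq, freq, h.count_eq, h.length_eq]
  rw [profit, profit, this]

section
variable {ι R : Type*} [CommRing R] [LinearOrder R] [IsStrictOrderedRing R]

lemma sum_sub_mul_le {s : Finset ι} {f g : ι → R} {p : R} {i : ι} (hi : i ∈ s) (hfi : f i = p)
    (hfp : ∀ a ∈ s, f a ≤ p) (hgf : ∀ a ∈ s, g a ≤ 2 * f a)
    (hsum : ∑ a ∈ s, g a = ∑ a ∈ s, f a) :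
    ∑ a ∈ s, (f a - g a) * f a ≤ p * (∑ a ∈ s, f a - p) := by
  calc ∑ a ∈ s, (f a - g a) * f a
        = ∑ a ∈ s, (g a - f a) * (p - f a) - ∑ a ∈ s, (g a - f a) * p := by
        rw [← sum_sub_distrib]; exact sum_congr rfl fun a _ => by ring
    _ = ∑ a ∈ s, (g a - f a) * (p - f a) := by
        rw [← sum_mul, sum_sub_distrib, hsum, sub_self, zero_mul, sub_zero]
    _ ≤ ∑ a ∈ s, f a * (p - f a) := sum_le_sum fun a ha => by
        nlinarith [hgf a ha, hfp a ha]
    _ = p * ∑ a ∈ s, f a - ∑ a ∈ s, f a ^ 2 := by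
        rw [mul_sum, ← sum_sub_distrib]; exact sum_congr rfl fun a _ => by ring
    _ ≤ p * (∑ a ∈ s, f a - p) := by
        have : p ^ 2 ≤ ∑ a ∈ s, f a ^ 2 := hfi ▸ single_le_sum (fun a _ => sq_nonneg (f a)) hi
        linarith

end

lemma sub_sq_div_le_quarter (p n : ℝ) (hn : 0 < n) : p - p ^ 2 / n ≤ n / 4 := by
  have : n / 4 - (p - p ^ 2 / n) = (n - 2 * p) ^ 2 / (4 * n) := by field_simp; ring
  linarith [show 0 ≤ (n - 2 * p) ^ 2 / (4 * n) by positivity]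

lemma naiP_sub_majP_le {I J : List ℕ} (hJ : J.Perm I) {a : ℕ} (ha : a ∈ I)
    (hmax : ∀ b ∈ I, I.count b ≤ I.count a) :
    naiP I - majP J ≤ (I.count a : ℝ) - (I.count a : ℝ) ^ 2 / I.length := by
  set B := majBuffers J
  have hB : B.toFinset ⊆ I.toFinset := fun b hb => by
    rw [List.mem_toFinset, ← hJ.mem_iff] at *
    exact mem_of_mem_majBuffers hb
  have hn : (0 : ℝ) < I.length := by exact_mod_cast List.length_pos_of_mem ha
  have hbound := sum_sub_mul_le (s := I.toFinset) (f := fun b => (I.count b : ℝ))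
    (g := fun b => (B.count b : ℝ)) (List.mem_toFinset.mpr ha) rfl
    (fun b hb => by exact_mod_cast hmax b (List.mem_toFinset.mp hb))
    (fun b _ => by exact_mod_cast hJ.count_eq b ▸ count_majBuffers_le J b)
    (by simp only [← Nat.cast_sum, sum_count_eq_length_of_subset hB,
      sum_count_eq_length_of_subset subset_rfl, B, length_majBuffers, hJ.length_eq])
  rw [naiP, majP, profit_perm hJ, profit_eq_sum_count_s14 subset_rfl, profit_eq_sum_count_s14 hB,
    ← sub_div, ← sum_sub_distrib, div_le_iff₀ hn]
  simp only [← Nat.cast_sum, sum_count_eq_length_of_subset subset_rfl] at hbound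
  calc _ = ∑ b ∈ I.toFinset, ((I.count b : ℝ) - B.count b) * I.count b :=
        sum_congr rfl fun b _ => by ring
    _ ≤ _ := hbound
    _ = _ := by field_simp

lemma exists_max_count {I : List ℕ} (hI : I ≠ []) : ∃ a ∈ I, ∀ b ∈ I, I.count b ≤ I.count a := by
  obtain ⟨a, ha, hmax⟩ := I.toFinset.exists_max_image I.count (by simpa using hI)
  exact ⟨a, List.mem_toFinset.mp ha, fun b hb => hmax b (List.mem_toFinset.mpr hb)⟩

lemma naiP_sub_majP_le_quarter (I : List ℕ) : naiP I - majP I ≤ I.length / 4 := by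
  rcases eq_or_ne I [] with rfl | hI
  · simp [naiP, majP, majBuffers, profit]
  obtain ⟨a, ha, hmax⟩ := exists_max_count hI
  exact (naiP_sub_majP_le (List.Perm.refl I) ha hmax).trans
    (sub_sq_div_le_quarter _ _ (by exact_mod_cast List.length_pos_iff.mpr hI))

lemma le_worstP_majP {I : List ℕ} {c : ℝ} (h : ∀ J, J.Perm I → c ≤ majP J) :
    c ≤ worstP majP I :=
  le_csInf ⟨_, I, List.Perm.refl I, rfl⟩ fun _ ⟨J, hJ, hx⟩ => hx ▸ h J hJ

lemma one_le_majP {J : List ℕ} (hJ : J ≠ []) : 1 ≤ majP J := by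
  have hn : (0 : ℝ) < J.length := by exact_mod_cast List.length_pos_iff.mpr hJ
  calc (1 : ℝ) = ((majBuffers J).map fun _ => 1 / (J.length : ℝ)).sum := by
        simp only [List.map_const', length_majBuffers, List.sum_replicate, nsmul_eq_mul]
        field_simp
    _ ≤ majP J := List.sum_le_sum fun b hb => by
        rw [freq, div_le_div_iff_of_pos_right hn]
        exact_mod_cast List.count_pos_iff.mpr (mem_of_mem_majBuffers hb)

lemma sum_map_flatMap_range_pair (k : ℕ) (f h : ℕ → ℕ) (g : ℕ → ℝ) :
    (((List.range k).flatMap fun i => [f i, h i]).map g).sum =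
      ∑ i ∈ range k, (g (f i) + g (h i)) := by
  rw [List.map_flatMap, List.flatMap, List.sum_flatten, List.map_map, ← List.toFinset_range,
    List.sum_toFinset _ List.nodup_range]
  simp [Function.comp_def]

lemma Wseq_two_mul (k : ℕ) : Wseq (2 * k) = (List.range k).flatMap fun i => [i + 1, 0] := by
  simp [Wseq]

lemma length_Wseq_two_mul (k : ℕ) : (Wseq (2 * k)).length = 2 * k := by
  rw [Wseq_two_mul]
  simp [List.length_flatMap, mul_comm]

lemma freq_Wseq_two_mul_zero {k : ℕ} (hk : 0 < k) : freq (Wseq (2 * k)) 0 = 1 / 2 := by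
  have hcount : (Wseq (2 * k)).count 0 = k := by
    simp [Wseq_two_mul, List.count_flatMap, Function.comp_def]
  have : (k : ℝ) ≠ 0 := by positivity
  rw [freq, hcount, length_Wseq_two_mul]
  push_cast
  field_simp

lemma freq_Wseq_two_mul_succ {k i : ℕ} (hi : i < k) :
    freq (Wseq (2 * k)) (i + 1) = 1 / (2 * k) := by
  have hcount : (Wseq (2 * k)).count (i + 1) = 1 := by
    rw [Wseq_two_mul, List.count_flatMap, ← List.sum_toFinset _ List.nodup_range]
    simp [List.count_cons, hi]
  simp [freq, hcount, length_Wseq_two_mul]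

lemma majBuffersFrom_flatMap_range' (m j b : ℕ) :
    majBuffersFrom (b, 0) ((List.range' j m).flatMap fun i => [i + 1, 0]) =
      (List.range' j m).flatMap fun i => [i + 1, i + 1] := by
  induction m generalizing j b with
  | zero => simp
  | succ m ih => simp [List.range'_succ, majStep, ih]

lemma majBuffers_Wseq_two_mul (k : ℕ) :
    majBuffers (Wseq (2 * k)) = (List.range k).flatMap fun i => [i + 1, i + 1] := by
  rw [Wseq_two_mul, List.range_eq_range']
  exact majBuffersFrom_flatMap_range' k 0 0

lemma naiP_Wseq_two_mul {k : ℕ} (hk : 0 < k) : naiP (Wseq (2 * k)) = (k + 1) / 2 := by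
  have : (k : ℝ) ≠ 0 := by positivity
  rw [naiP, profit, Wseq_two_mul, sum_map_flatMap_range_pair, ← Wseq_two_mul,
    sum_congr rfl fun i hi => by
      rw [freq_Wseq_two_mul_succ (mem_range.mp hi), freq_Wseq_two_mul_zero hk]]
  rw [sum_const, card_range, nsmul_eq_mul]
  field_simp
  ring

lemma majP_Wseq_two_mul {k : ℕ} (hk : 0 < k) : majP (Wseq (2 * k)) = 1 := by
  have : (k : ℝ) ≠ 0 := by positivity
  rw [majP, profit, majBuffers_Wseq_two_mul, sum_map_flatMap_range_pair,
    sum_congr rfl fun i hi => by rw [freq_Wseq_two_mul_succ (mem_range.mp hi)]]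
  rw [sum_const, card_range, nsmul_eq_mul]
  field_simp
  ring

lemma worstP_majP_Wseq_two_mul {k : ℕ} (hk : 0 < k) : worstP majP (Wseq (2 * k)) = 1 := by
  have hne : ∀ J, J.Perm (Wseq (2 * k)) → J ≠ [] := fun J hJ hnil => by
    simpa [hnil, length_Wseq_two_mul, hk.ne'] using hJ.length_eq
  refine le_antisymm (csInf_le ⟨1, ?_⟩ ⟨_, List.Perm.refl _, (majP_Wseq_two_mul hk).symm⟩)
    (le_worstP_majP fun J hJ => one_le_majP (hne J hJ))
  rintro _ ⟨J, hJ, rfl⟩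
  exact one_le_majP (hne J hJ)

lemma maxDiff_naiP_majP_le (n : ℕ) : maxDiff naiP majP n ≤ n / 4 :=
  Real.sSup_le (fun _ ⟨I, hI, hd⟩ => hd ▸ hI ▸ naiP_sub_majP_le_quarter I) (by positivity)

lemma le_maxDiff_naiP_majP_two_mul {k : ℕ} (hk : 0 < k) :
    (k : ℝ) / 2 - 1 / 2 ≤ maxDiff naiP majP (2 * k) := by
  have hbdd : BddAbove {d | ∃ I : List ℕ, I.length = 2 * k ∧ d = naiP I - majP I} :=
    ⟨(2 * k : ℕ) / 4, fun _ ⟨I, hI, hd⟩ => hd ▸ hI ▸ naiP_sub_majP_le_quarter I⟩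
  have hW := le_csSup hbdd ⟨Wseq (2 * k), length_Wseq_two_mul k, rfl⟩
  rw [naiP_Wseq_two_mul hk, majP_Wseq_two_mul hk] at hW
  rw [maxDiff]
  linarith

lemma limsup_eq_of_eventually_le_of_frequently_ge {α : Type*} {l : Filter α} {u : α → ℝ}
    {c : ℝ} (hle : ∀ᶠ x in l, u x ≤ c) (hge : ∀ ε > 0, ∃ᶠ x in l, c - ε ≤ u x) :
    limsup u l = c :=
  le_antisymm (limsup_le_of_le (IsCoboundedUnder.of_frequently_ge (hge 1 one_pos)) hle)
    (le_of_forall_sub_le fun ε hε =>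
      le_limsup_of_frequently_le (hge ε hε) (isBoundedUnder_of_eventually_le hle))

lemma limsup_maxDiff_naiP_majP :
    limsup (fun n => maxDiff naiP majP n / (n : ℝ)) atTop = 1 / 4 := by
  refine limsup_eq_of_eventually_le_of_frequently_ge (Eventually.of_forall fun n => ?_)
    fun ε hε => ?_
  · rcases eq_or_ne n 0 with rfl | hn
    · norm_num
    · rw [div_le_iff₀ (by positivity)]
      linarith [maxDiff_naiP_majP_le n]
  · have hsmall : ∀ᶠ k : ℕ in atTop, 1 / 4 / (k : ℝ) < ε :=
      (tendsto_const_div_atTop_nhds_zero_nat (1 / 4 : ℝ)).eventually (gt_mem_nhds hε)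
    refine (tendsto_id.const_mul_atTop' two_pos).frequently ?_
    refine (hsmall.and (eventually_gt_atTop 0)).frequently.mono fun k ⟨hkε, hk⟩ => ?_
    have hkR : (0 : ℝ) < k := by exact_mod_cast hk
    have := le_maxDiff_naiP_majP_two_mul hk
    simp only [Nat.cast_mul, Nat.cast_ofNat, id]
    rw [le_div_iff₀ (by positivity)]
    rw [div_lt_iff₀ hkR] at hkε
    nlinarith

/-- Nai(I) − Maj_W(I) ≤ p − p²/n ≤ n/4 where p is the number of
occurrences of the most frequent item; equality up to O(1) on W_n; hence
Max(Nai, Maj) = 1/4 in relative interval analysis. -/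
theorem stmt14 :
    (∀ (I : List ℕ) (p : ℕ), (∃ a ∈ I, I.count a = p) → (∀ b ∈ I, I.count b ≤ p) →
      naiP I - worstP majP I ≤ (p : ℝ) - (p : ℝ) ^ 2 / I.length ∧
      (p : ℝ) - (p : ℝ) ^ 2 / I.length ≤ (I.length : ℝ) / 4) ∧
    (∀ n : ℕ, Even n → 2 ≤ n →
      naiP (Wseq n) - worstP majP (Wseq n) = (n : ℝ) / 4 - 1 / 2) ∧
    Filter.limsup (fun n => maxDiff naiP majP n / (n : ℝ)) Filter.atTop = 1 / 4 := by
  refine ⟨?_, ?_, limsup_maxDiff_naiP_majP⟩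
  · rintro I _ ⟨a, ha, rfl⟩ hmax
    refine ⟨?_, sub_sq_div_le_quarter _ _ (by exact_mod_cast List.length_pos_of_mem ha)⟩
    have := le_worstP_majP fun J hJ => sub_le_comm.mp (naiP_sub_majP_le hJ ha hmax)
    linarith
  · rintro n ⟨k, rfl⟩ hn
    have hk : 0 < k := by omega
    rw [← two_mul, naiP_Wseq_two_mul hk, worstP_majP_Wseq_two_mul hk]
    push_cast
    ring
end
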